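/- Let K* = Pᶠ·Hᵀ·(H·Pᶠ·Hᵀ + R)⁻¹ be the Kalman gain. Then for every n×m real matrix E, the real function t ↦ log(det(Pᵃ(K* + t·E))) has derivative zero at t = 0; that is, the Kalman gain is a critical point of the log generalized variance of the analysis distribution. -/

import Mathlib

/-!
Perturbing a gain `K` by `E` changes the Joseph covariance by `-C Eᵀ - E Cᵀ + E S Eᵀ`, where
`S = H Pᶠ Hᵀ + R` is the innovation covariance and `C = Pᶠ Hᵀ - K S`. The Kalman gain is the gain
with `C = 0`, so `Pᵃ(K* + t E) = Pᵃ(K*) + t² E S Eᵀ` is a function of `t²`. As `Pᵃ(K*)` is positive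
definite, `s ↦ log det (Pᵃ(K*) + s E S Eᵀ)` is differentiable at `0`, and composing with `t ↦ t²`
kills the derivative.
-/

open Matrix

theorem hasDerivAt_comp_sq_zero {𝕜 F : Type*} [NontriviallyNormedField 𝕜] [NormedAddCommGroup F]
    [NormedSpace 𝕜 F] {g : 𝕜 → F} (hg : DifferentiableAt 𝕜 g 0) :
    HasDerivAt (fun t => g (t ^ 2)) 0 0 := by
  have hsq : HasDerivAt (fun t : 𝕜 => t ^ 2) 0 0 := by simpa using hasDerivAt_pow 2 (0 : 𝕜)
  have hg' : HasDerivAt g (deriv g 0) ((0 : 𝕜) ^ 2) := by simpa using hg.hasDerivAt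
  simpa only [zero_smul, Function.comp_def] using hg'.scomp (h := fun t : 𝕜 => t ^ 2) 0 hsq

theorem differentiable_det_add_smul {𝕜 ι : Type*} [NontriviallyNormedField 𝕜] [Fintype ι]
    [DecidableEq ι] (A M : Matrix ι ι 𝕜) : Differentiable 𝕜 fun s : 𝕜 => (A + s • M).det := by
  simp only [det_apply', Matrix.add_apply, Matrix.smul_apply, smul_eq_mul]
  fun_prop

theorem hasDerivAt_log_det_add_sq_smul {ι : Type*} [Fintype ι] [DecidableEq ι]
    {A : Matrix ι ι ℝ} (hA : A.det ≠ 0) (M : Matrix ι ι ℝ) :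
    HasDerivAt (fun t : ℝ => Real.log (A + t ^ 2 • M).det) 0 0 :=
  hasDerivAt_comp_sq_zero ((differentiable_det_add_smul A M 0).log (by simpa using hA))

section Joseph

variable {ι κ 𝕜 : Type*} [Fintype ι] [Fintype κ] [CommRing 𝕜]

def innovationCov (Pf : Matrix ι ι 𝕜) (R : Matrix κ κ 𝕜) (H : Matrix κ ι 𝕜) : Matrix κ κ 𝕜 :=
  H * Pf * Hᵀ + R

variable [DecidableEq ι]

def josephCov (Pf : Matrix ι ι 𝕜) (R : Matrix κ κ 𝕜) (H : Matrix κ ι 𝕜) (K : Matrix ι κ 𝕜) :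
    Matrix ι ι 𝕜 :=
  (1 - K * H) * Pf * (1 - K * H)ᵀ + K * R * Kᵀ

theorem josephCov_add {Pf : Matrix ι ι 𝕜} {R : Matrix κ κ 𝕜} (hPf : Pf.IsSymm) (hR : R.IsSymm)
    (H : Matrix κ ι 𝕜) (K E : Matrix ι κ 𝕜) :
    josephCov Pf R H (K + E) =
      josephCov Pf R H K - (Pf * Hᵀ - K * innovationCov Pf R H) * Eᵀ
        - E * (Pf * Hᵀ - K * innovationCov Pf R H)ᵀ + E * innovationCov Pf R H * Eᵀ := by
  simp only [josephCov, innovationCov, Matrix.add_mul, Matrix.mul_add, Matrix.sub_mul,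
    Matrix.mul_sub, transpose_add, transpose_sub, transpose_mul, transpose_transpose, transpose_one,
    Matrix.one_mul, Matrix.mul_one, hPf.eq, hR.eq, Matrix.mul_assoc]
  abel

variable [DecidableEq κ]

noncomputable def kalmanGain (Pf : Matrix ι ι 𝕜) (R : Matrix κ κ 𝕜) (H : Matrix κ ι 𝕜) :
    Matrix ι κ 𝕜 :=
  Pf * Hᵀ * (innovationCov Pf R H)⁻¹

theorem josephCov_kalmanGain_add {Pf : Matrix ι ι 𝕜} {R : Matrix κ κ 𝕜} (hPf : Pf.IsSymm)
    (hR : R.IsSymm) {H : Matrix κ ι 𝕜} (hS : IsUnit (innovationCov Pf R H).det)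
    (E : Matrix ι κ 𝕜) :
    josephCov Pf R H (kalmanGain Pf R H + E) =
      josephCov Pf R H (kalmanGain Pf R H) + E * innovationCov Pf R H * Eᵀ := by
  rw [josephCov_add hPf hR, kalmanGain, Matrix.nonsing_inv_mul_cancel_right _ _ hS]
  simp

end Joseph

section PosDef

variable {ι κ : Type*} [Fintype ι] [Fintype κ]

theorem Matrix.PosSemidef.mul_mul_transpose_same {P : Matrix ι ι ℝ} (hP : P.PosSemidef)
    (B : Matrix κ ι ℝ) : (B * P * Bᵀ).PosSemidef := by
  rw [← conjTranspose_eq_transpose_of_trivial]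
  exact hP.mul_mul_conjTranspose_same B

theorem dotProduct_mulVec_mul_mul_transpose (B : Matrix ι κ ℝ) (M : Matrix κ κ ℝ) (x : ι → ℝ) :
    x ⬝ᵥ (B * M * Bᵀ) *ᵥ x = (Bᵀ *ᵥ x) ⬝ᵥ M *ᵥ (Bᵀ *ᵥ x) := by
  rw [← mulVec_mulVec, ← mulVec_mulVec, dotProduct_mulVec, ← mulVec_transpose]

theorem innovationCov_posDef {Pf : Matrix ι ι ℝ} {R : Matrix κ κ ℝ} (hPf : Pf.PosSemidef)
    (hR : R.PosDef) (H : Matrix κ ι ℝ) : (innovationCov Pf R H).PosDef :=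
  PosDef.posSemidef_add (hPf.mul_mul_transpose_same H) hR

theorem josephCov_posDef [DecidableEq ι] {Pf : Matrix ι ι ℝ} {R : Matrix κ κ ℝ} (hPf : Pf.PosDef)
    (hR : R.PosDef) (H : Matrix κ ι ℝ) (K : Matrix ι κ ℝ) : (josephCov Pf R H K).PosDef := by
  have hPfB := hPf.posSemidef.mul_mul_transpose_same (1 - K * H)
  have hRK := hR.posSemidef.mul_mul_transpose_same K
  refine PosDef.of_dotProduct_mulVec_pos (hPfB.isHermitian.add hRK.isHermitian) fun x hx => ?_
  rw [star_trivial, josephCov, add_mulVec, dotProduct_add, dotProduct_mulVec_mul_mul_transpose,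
    dotProduct_mulVec_mul_mul_transpose]
  by_cases hKx : Kᵀ *ᵥ x = 0
  · have hBx : (1 - K * H)ᵀ *ᵥ x = x := by
      simp [transpose_sub, transpose_mul, sub_mulVec, ← mulVec_mulVec, hKx]
    rw [hBx, hKx]
    simpa using hPf.dotProduct_mulVec_pos hx
  · have hPf_nonneg := hPf.posSemidef.dotProduct_mulVec_nonneg ((1 - K * H)ᵀ *ᵥ x)
    have hR_pos := hR.dotProduct_mulVec_pos hKx
    rw [star_trivial] at hPf_nonneg hR_pos
    linarith

end PosDef

theorem kalman_gain_critical_point_general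
    (n m : ℕ)
    (Pf : Matrix (Fin n) (Fin n) ℝ) (hPf : Pf.PosDef)
    (R : Matrix (Fin m) (Fin m) ℝ) (hR : R.PosDef)
    (H : Matrix (Fin m) (Fin n) ℝ)
    (Pa : Matrix (Fin n) (Fin m) ℝ → Matrix (Fin n) (Fin n) ℝ)
    (hPa : ∀ K, Pa K = (1 - K * H) * Pf * (1 - K * H)ᵀ + K * R * Kᵀ)
    (Kstar : Matrix (Fin n) (Fin m) ℝ)
    (hKstar : Kstar = Pf * Hᵀ * (H * Pf * Hᵀ + R)⁻¹) :
    ∀ E : Matrix (Fin n) (Fin m) ℝ,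
      HasDerivAt (fun t : ℝ => Real.log (Pa (Kstar + t • E)).det) 0 0 := by
  intro E
  obtain rfl : Pa = josephCov Pf R H := funext hPa
  obtain rfl : Kstar = kalmanGain Pf R H := hKstar
  have hS : IsUnit (innovationCov Pf R H).det :=
    (innovationCov_posDef hPf.posSemidef hR H).det_pos.ne'.isUnit
  have expand (t : ℝ) : josephCov Pf R H (kalmanGain Pf R H + t • E) =
      josephCov Pf R H (kalmanGain Pf R H) + t ^ 2 • (E * innovationCov Pf R H * Eᵀ) := by
    rw [josephCov_kalmanGain_add (isHermitian_iff_isSymm.mp hPf.isHermitian)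
      (isHermitian_iff_isSymm.mp hR.isHermitian) hS]
    simp [pow_two, smul_smul]
  simp_rw [expand]
  exact hasDerivAt_log_det_add_sq_smul (josephCov_posDef hPf hR H _).det_pos.ne' _

/-- The Kalman gain `K* = Pᶠ Hᵀ (H Pᶠ Hᵀ + R)⁻¹` is a critical point of the log
generalized variance: for every direction `E`, the function
`t ↦ log (det (Pᵃ(K* + t E)))` has derivative zero at `t = 0`, where
`Pᵃ(K) = (I − K H) Pᶠ (I − K H)ᵀ + K R Kᵀ`. -/
theorem kalman_gain_critical_point
    (n m : ℕ) (hn : 0 < n) (hm : 0 < m)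
    (Pf : Matrix (Fin n) (Fin n) ℝ) (hPf : Pf.PosDef)
    (R : Matrix (Fin m) (Fin m) ℝ) (hR : R.PosDef)
    (H : Matrix (Fin m) (Fin n) ℝ)
    (Pa : Matrix (Fin n) (Fin m) ℝ → Matrix (Fin n) (Fin n) ℝ)
    (hPa : ∀ K, Pa K = (1 - K * H) * Pf * (1 - K * H)ᵀ + K * R * Kᵀ)
    (Kstar : Matrix (Fin n) (Fin m) ℝ)
    (hKstar : Kstar = Pf * Hᵀ * (H * Pf * Hᵀ + R)⁻¹) :
    ∀ E : Matrix (Fin n) (Fin m) ℝ,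
      HasDerivAt (fun t : ℝ => Real.log (Pa (Kstar + t • E)).det) 0 0 :=
  kalman_gain_critical_point_general n m Pf hPf R hR H Pa hPa Kstar hKstar
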